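/- Let M > 1, n ≥ 1 a natural number, and v ≥ 0 with (n−1)·M·v ≤ (M−1)·n and (n−1)·v < n. Let α ∈ [1/M, 1) satisfy the cubic h(α) = 0 and β ∈ (α/M, (M+1)/(2M)) satisfy q(β) = 0 (h and q as in the context), and define λ₁, λ₂, λ₃, λ₄, λ₅ as in the context (with λ₀ := 0 playing the role of λ_{0,*}). Then the following identities hold: (1) β = nλ₁ + nMλ₂; (2) α = λ₀ + Mλ₃ + nMα(λ₁ + λ₂); (3) α² = (n − (n−1)v)(λ₄ + λ₅) + (λ₀ + λ₃) + nMα²(λ₄ + λ₅ + λ₁ + λ₂) − 2nαλ₄ − 2nMαλ₅; (4) β² = n(λ₂ + λ₁) + (n − (n−1)v)(λ₄ + λ₅); (5) αβ = −n(λ₄ + λ₅) + nMα(λ₄ + λ₂) + nα(λ₅ + λ₁). -/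

import Mathlib

/-!
Write `D = 1 + M + (M - 1)α` and `E = n - (n - 1)v`. Identities (1), (2) and (4) hold for all
`α, β`: they only use the closed forms of `nλ₁ + nMλ₂`, `n(λ₁ + λ₂)`, `λ₃` and `λ₄ ± λ₅`.
Identities (3) and (5) say that the polynomials `P₃ = alphaSqNumerator` and
`P₅ = alphaBetaNumerator` in `α, β` vanish, and modulo the cubic `h` both are multiples of `q`:
with `A = (M - 1)²n + (M + 1)²(n - 1)v`,
`A P₅ = ((M + 1)α - 2) q + 2E(M + 1)(2Mβ - M - 1) h` and
`nA P₃ = (E + nα(Mα - M - 1)) q + E(2Mβ - M - 1)(n(2Mα - M - 1) + (M + 1)(n - 1)v) h`.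
-/

/-- The cubic `h(α)` from the two-step stochastic stepsize schedule analysis. -/
noncomputable def hcub (M n v α : ℝ) : ℝ :=
  (M - 1) * M * n * α ^ 3 - (M + 1) * (M - 2) * n * α ^ 2
    - (4 * n + (M - 1) * (n - 1) * v) * α + 2 * n

/-- The quadratic `q(β)` (in `β`, with parameters `M, n, v, α`) from the
two-step stochastic stepsize schedule analysis. -/
noncomputable def qquad (M n v α β : ℝ) : ℝ :=
  M * n * ((M - 1) ^ 2 * n + (M + 1) ^ 2 * (n - 1) * v) * ((M - 1) * α + (M + 1)) * β ^ 2
  + 2 * M * (2 * (M - 1) * M * n * ((n - 1) * v - n) * α ^ 2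
      + (M + 1) * ((n - 1) * v - n) * ((3 - M) * n + (M - 1) * (n - 1) * v) * α
      + n * (n - (M - 4) * M * n - (M + 1) * (M + 3) * (n - 1) * v)) * β
  + (-2 * M * (M ^ 2 - 1) * n * ((n - 1) * v - n) * α ^ 2
      + (2 * (2 + M + 2 * M ^ 2 - M ^ 3) * n ^ 2 + (M - 3) * (M + 1) ^ 2 * (n - 1) * n * v
          - (M - 1) * (M + 1) ^ 2 * (n - 1) ^ 2 * v ^ 2) * α
      + 2 * (M + 1) ^ 2 * n * ((n - 1) * v - n))

/-- The dual multiplier `l1 = λ_{i,*}`. -/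
noncomputable def lam1 (M n α β : ℝ) : ℝ :=
  (α + β - α * β) / (n * (1 + M + (M - 1) * α))

/-- The dual multiplier `l2 = λ_{*,i}`. -/
noncomputable def lam2 (M n α β : ℝ) : ℝ :=
  (M * β + α * (M * β - 1)) / (M * n * (1 + M + (M - 1) * α))

/-- The dual multiplier `l3 = λ_{*,0}`. -/
noncomputable def lam3 (M n α β : ℝ) : ℝ :=
  n * (lam1 M n α β - lam2 M n α β)

/-- The dual multiplier `l4 = λ_{0,i}`. -/
noncomputable def lam4 (M n v α β : ℝ) : ℝ :=
  (n ^ 2 * (lam1 M n α β + M * lam2 M n α β) ^ 2 - n * (lam1 M n α β + lam2 M n α β))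
      / (2 * (n - (n - 1) * v))
    + (lam1 M n α β - lam2 M n α β) / 2

/-- The dual multiplier `l5 = λ_{i,0}`. -/
noncomputable def lam5 (M n v α β : ℝ) : ℝ :=
  (n ^ 2 * (lam1 M n α β + M * lam2 M n α β) ^ 2 - n * (lam1 M n α β + lam2 M n α β))
      / (2 * (n - (n - 1) * v))
    - (lam1 M n α β - lam2 M n α β) / 2

/-- The dual multiplier `τ`. -/
noncomputable def tauD (M n α β : ℝ) : ℝ :=
  1 - M * (lam3 M n α β + n * lam1 M n α β + n * lam2 M n α β)


lemma lam4_sub_lam5 (M n v α β : ℝ) :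
    lam4 M n v α β - lam5 M n v α β = lam1 M n α β - lam2 M n α β := by
  unfold lam4 lam5
  ring

section

variable {M n v α β : ℝ}

lemma mul_lam1_add_mul_lam2 (hM : M ≠ 0) (hn : n ≠ 0) (hD : 1 + M + (M - 1) * α ≠ 0) :
    n * lam1 M n α β + n * M * lam2 M n α β = β := by
  unfold lam1 lam2
  rw [mul_div_assoc', mul_div_assoc', div_add_div _ _ (by positivity) (by positivity),
    div_eq_iff (by positivity)]
  ring

lemma mul_mul_lam1_add_lam2 (hM : M ≠ 0) (hn : n ≠ 0) (hD : 1 + M + (M - 1) * α ≠ 0) :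
    M * (1 + M + (M - 1) * α) * (n * (lam1 M n α β + lam2 M n α β))
      = (M - 1) * α + 2 * M * β := by
  unfold lam1 lam2
  field_simp
  ring

lemma mul_lam3 (hM : M ≠ 0) (hn : n ≠ 0) (hD : 1 + M + (M - 1) * α ≠ 0) :
    M * (1 + M + (M - 1) * α) * lam3 M n α β = α * (M + 1 - 2 * M * β) := by
  unfold lam3 lam1 lam2
  field_simp
  ring

lemma mul_lam4_add_lam5 (hM : M ≠ 0) (hn : n ≠ 0) (hD : 1 + M + (M - 1) * α ≠ 0)
    (hE : n - (n - 1) * v ≠ 0) :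
    (n - (n - 1) * v) * (lam4 M n v α β + lam5 M n v α β)
      = β ^ 2 - n * (lam1 M n α β + lam2 M n α β) := by
  have h := mul_lam1_add_mul_lam2 (β := β) hM hn hD
  unfold lam4 lam5
  field_simp
  linear_combination 2 * (n * lam1 M n α β + n * M * lam2 M n α β + β) * h

lemma eq_mul_lam3_add (hM : M ≠ 0) (hn : n ≠ 0) (hD : 1 + M + (M - 1) * α ≠ 0) :
    α = M * lam3 M n α β + n * M * α * (lam1 M n α β + lam2 M n α β) := by
  apply mul_left_cancel₀ (mul_ne_zero hM hD)
  linear_combination -M * mul_lam3 (β := β) hM hn hD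
    - M * α * mul_mul_lam1_add_lam2 (β := β) hM hn hD

end

/- `-2EMD` times the difference of the two sides of (5), resp. `-EMD` times that of (3), once the
`λᵢ` are eliminated. -/
noncomputable def alphaBetaNumerator (M n v α β : ℝ) : ℝ :=
  n * (M * (1 + M + (M - 1) * α) * β ^ 2 - ((M - 1) * α + 2 * M * β)) * ((M + 1) * α - 2)
    + (M - 1) * (n - (n - 1) * v) * α ^ 2 * (M + 1 - 2 * M * β)

noncomputable def alphaSqNumerator (M n v α β : ℝ) : ℝ :=
  (M * (1 + M + (M - 1) * α) * β ^ 2 - ((M - 1) * α + 2 * M * β))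
      * (n - (n - 1) * v + n * α * (M * α - M - 1))
    + (n - (n - 1) * v) * α * (α - 1) * (2 * M * β - M - 1)

section

variable {M n v α β : ℝ}

lemma alphaBetaNumerator_eq_zero_of_hcub_qquad
    (hA : (M - 1) ^ 2 * n + (M + 1) ^ 2 * (n - 1) * v ≠ 0)
    (hh : hcub M n v α = 0) (hq : qquad M n v α β = 0) : alphaBetaNumerator M n v α β = 0 := by
  apply mul_left_cancel₀ hA
  unfold hcub at hh
  unfold qquad at hq
  unfold alphaBetaNumerator
  linear_combination ((M + 1) * α - 2) * hq
    + 2 * (n - (n - 1) * v) * (M + 1) * (2 * M * β - M - 1) * hh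

lemma alphaSqNumerator_eq_zero_of_hcub_qquad
    (hA : (M - 1) ^ 2 * n + (M + 1) ^ 2 * (n - 1) * v ≠ 0) (hn : n ≠ 0)
    (hh : hcub M n v α = 0) (hq : qquad M n v α β = 0) : alphaSqNumerator M n v α β = 0 := by
  apply mul_left_cancel₀ (mul_ne_zero hn hA)
  unfold hcub at hh
  unfold qquad at hq
  unfold alphaSqNumerator
  linear_combination (n - (n - 1) * v + n * α * (M * α - M - 1)) * hq
    + (n - (n - 1) * v) * (2 * M * β - M - 1)
      * (n * (2 * M * α - M - 1) + (M + 1) * (n - 1) * v) * hh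

lemma mul_eq_of_alphaBetaNumerator_eq_zero (hM : M ≠ 0) (hn : n ≠ 0)
    (hD : 1 + M + (M - 1) * α ≠ 0) (hE : n - (n - 1) * v ≠ 0)
    (h : alphaBetaNumerator M n v α β = 0) :
    α * β = -(n * (lam4 M n v α β + lam5 M n v α β))
      + n * M * α * (lam4 M n v α β + lam2 M n α β) + n * α * (lam5 M n v α β + lam1 M n α β) := by
  have hσ := mul_mul_lam1_add_lam2 (β := β) hM hn hD
  have hS := mul_lam4_add_lam5 (β := β) hM hn hD hE
  unfold alphaBetaNumerator at h
  calc α * β = -(n * (lam4 M n v α β + lam5 M n v α β))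
        + (M + 1) * α * (n * (lam4 M n v α β + lam5 M n v α β)
          + n * (lam1 M n α β + lam2 M n α β)) / 2 := by
        apply mul_left_cancel₀
          (by positivity : 2 * (n - (n - 1) * v) * M * (1 + M + (M - 1) * α) ≠ 0)
        linear_combination -h - n * M * (1 + M + (M - 1) * α) * ((M + 1) * α - 2) * hS
          - ((M + 1) * α * (n - (n - 1) * v) - n * ((M + 1) * α - 2)) * hσ
    _ = _ := by
      linear_combination -n * α * (M - 1) / 2 * lam4_sub_lam5 M n v α β

lemma sq_eq_of_alphaSqNumerator_eq_zero (hM : M ≠ 0) (hn : n ≠ 0)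
    (hD : 1 + M + (M - 1) * α ≠ 0) (hE : n - (n - 1) * v ≠ 0)
    (h : alphaSqNumerator M n v α β = 0) :
    α ^ 2 = (n - (n - 1) * v) * (lam4 M n v α β + lam5 M n v α β) + lam3 M n α β
      + n * M * α ^ 2 * (lam4 M n v α β + lam5 M n v α β + lam1 M n α β + lam2 M n α β)
      - 2 * n * α * lam4 M n v α β - 2 * n * M * α * lam5 M n v α β := by
  have hσ := mul_mul_lam1_add_lam2 (β := β) hM hn hD
  have hS := mul_lam4_add_lam5 (β := β) hM hn hD hE
  have h3 := mul_lam3 (β := β) hM hn hD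
  unfold alphaSqNumerator at h
  calc α ^ 2 = (n - (n - 1) * v) * (lam4 M n v α β + lam5 M n v α β)
        + (1 + (M - 1) * α) * lam3 M n α β
        + M * α ^ 2 * (n * (lam4 M n v α β + lam5 M n v α β) + n * (lam1 M n α β + lam2 M n α β))
        - (M + 1) * α * (n * (lam4 M n v α β + lam5 M n v α β)) := by
        apply mul_left_cancel₀
          (by positivity : (n - (n - 1) * v) * M * (1 + M + (M - 1) * α) ≠ 0)
        linear_combination -h
          + (n - (n - 1) * v + n * α * (M * α - M - 1) - M * α ^ 2 * (n - (n - 1) * v)) * hσ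
          - M * (1 + M + (M - 1) * α) * (n - (n - 1) * v + n * α * (M * α - M - 1)) * hS
          - (n - (n - 1) * v) * (1 + (M - 1) * α) * h3
    _ = _ := by
      unfold lam3
      linear_combination -n * α * (M - 1) * lam4_sub_lam5 M n v α β

end

theorem stmt_15 (M : ℝ) (n : ℕ) (v : ℝ)
    (hM : 1 < M) (hn : 1 ≤ n) (hv : 0 ≤ v)
    (hvn : ((n : ℝ) - 1) * v < n)
    (α β : ℝ)
    (hα : α ∈ Set.Ico (1 / M) 1) (hroot : hcub M (n : ℝ) v α = 0)
    (hqroot : qquad M (n : ℝ) v α β = 0) :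
    let l0 : ℝ := 0
    let l1 := lam1 M (n : ℝ) α β
    let l2 := lam2 M (n : ℝ) α β
    let l3 := lam3 M (n : ℝ) α β
    let l4 := lam4 M (n : ℝ) v α β
    let l5 := lam5 M (n : ℝ) v α β
    β = (n : ℝ) * l1 + (n : ℝ) * M * l2 ∧
    α = l0 + M * l3 + (n : ℝ) * M * α * (l1 + l2) ∧
    α ^ 2 = ((n : ℝ) - ((n : ℝ) - 1) * v) * (l4 + l5) + (l0 + l3)
        + (n : ℝ) * M * α ^ 2 * (l4 + l5 + l1 + l2)
        - 2 * (n : ℝ) * α * l4 - 2 * (n : ℝ) * M * α * l5 ∧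
    β ^ 2 = (n : ℝ) * (l2 + l1) + ((n : ℝ) - ((n : ℝ) - 1) * v) * (l4 + l5) ∧
    α * β = -((n : ℝ) * (l4 + l5)) + (n : ℝ) * M * α * (l4 + l2)
        + (n : ℝ) * α * (l5 + l1) := by
  intro l0 l1 l2 l3 l4 l5
  have hn1 : (1 : ℝ) ≤ n := by exact_mod_cast hn
  have hα0 : 0 < α := lt_of_lt_of_le (by positivity) hα.1
  have hM0 : M ≠ 0 := by positivity
  have hn0 : (n : ℝ) ≠ 0 := by positivity
  have hD : 1 + M + (M - 1) * α ≠ 0 := by nlinarith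
  have hE : (n : ℝ) - ((n : ℝ) - 1) * v ≠ 0 := by linarith
  have hA : (M - 1) ^ 2 * n + (M + 1) ^ 2 * ((n : ℝ) - 1) * v ≠ 0 := by
    have : 0 ≤ (n : ℝ) - 1 := by linarith
    have : 0 ≤ (M + 1) ^ 2 * ((n : ℝ) - 1) * v := by positivity
    nlinarith
  refine ⟨(mul_lam1_add_mul_lam2 hM0 hn0 hD).symm, ?_, ?_, ?_, ?_⟩
  · simpa only [l0, zero_add] using eq_mul_lam3_add (β := β) hM0 hn0 hD
  · simpa only [l0, zero_add] using sq_eq_of_alphaSqNumerator_eq_zero hM0 hn0 hD hE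
      (alphaSqNumerator_eq_zero_of_hcub_qquad hA hn0 hroot hqroot)
  · linear_combination -mul_lam4_add_lam5 (β := β) hM0 hn0 hD hE
  · exact mul_eq_of_alphaBetaNumerator_eq_zero hM0 hn0 hD hE
      (alphaBetaNumerator_eq_zero_of_hcub_qquad hA hroot hqroot)
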